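/- arXiv:1702.04464 — 2 statements merged into one kernel-verified Lean document; each statement's English description precedes it below -/
import Mathlib

section
/- Let f be nonnegative and Riemann integrable on [a,b], let K be a fixed natural number, and let d_{n,k} ≥ 0 satisfy (max_{1≤k≤n} d_{n,k})/n → 0 as n → ∞. Then lim_{n→∞} Σ_{k=K+1}^{n} f(a + (k/n)(b−a)) · (b−a)/(n + d_{n,k}) = ∫_a^b f(x) dx. -/
open Filter Finset Real

/-- `f` is Riemann integrable on `[a,b]` with Riemann integral `I`:
for every `ε > 0` there is `δ > 0` such that every tagged partition
`a = x 0 < x 1 < … < x n = b` with mesh `< δ` and tags `ξ k ∈ [x (k-1), x k]`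
has Riemann sum within `ε` of `I`. -/
def IsRiemannIntegral (f : ℝ → ℝ) (a b I : ℝ) : Prop :=
  ∀ ε > 0, ∃ δ > 0, ∀ (n : ℕ) (x ξ : ℕ → ℝ),
    0 < n → x 0 = a → x n = b →
    (∀ k ∈ Finset.Icc 1 n, x (k - 1) < x k) →
    (∀ k ∈ Finset.Icc 1 n, x k - x (k - 1) < δ) →
    (∀ k ∈ Finset.Icc 1 n, ξ k ∈ Set.Icc (x (k - 1)) (x k)) →
    |(∑ k ∈ Finset.Icc 1 n, f (ξ k) * (x k - x (k - 1))) - I| < ε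

/-! Riemann integrability bounds `f` on `[a, b]`: moving one tag of a fine uniform partition
changes the Riemann sum by at most `2`. The right-endpoint sums of the uniform partitions tend
to `I`, and deleting their first `K` terms does not change the limit, each such term being at
most `(sup f) (b - a) / n`. Replacing the width `(b - a) / n` by `(b - a) / (n + d)` changes a term by
the relative amount `d / (n + d) ≤ d / n`, uniformly small in `k`, and a uniformly small relative
perturbation of the terms of a convergent sum does not change its limit. -/

lemma exists_mem_Icc_pred_of_le {x : ℕ → ℝ} {n : ℕ} {t : ℝ} (hn : 0 < n) (h0 : x 0 ≤ t)
    (htn : t ≤ x n) : ∃ k ∈ Finset.Icc 1 n, t ∈ Set.Icc (x (k - 1)) (x k) := by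
  induction n, hn using Nat.le_induction with
  | base => exact ⟨1, by simp, h0, htn⟩
  | succ n hn ih =>
    by_cases htn' : t ≤ x n
    · obtain ⟨k, hk, hkt⟩ := ih htn'
      exact ⟨k, Finset.Icc_subset_Icc_right n.le_succ hk, hkt⟩
    · exact ⟨n + 1, by simp, (not_le.mp htn').le, htn⟩

lemma abs_mul_div_add_sub_le {c h n d ε : ℝ} (hc : 0 ≤ c) (hh : 0 ≤ h) (hn : 0 < n) (hd : 0 ≤ d)
    (hdn : d / n ≤ ε) : |c * (h / (n + d)) - c * (h / n)| ≤ ε * (c * (h / n)) := by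
  have hnd : 0 < n + d := by linarith
  have hle : h / (n + d) ≤ h / n := div_le_div_of_nonneg_left hh hn (by linarith)
  rw [abs_sub_comm, abs_of_nonneg (by nlinarith), ← mul_sub, mul_left_comm]
  refine mul_le_mul_of_nonneg_left ?_ hc
  calc h / n - h / (n + d) = d / (n + d) * (h / n) := by field_simp; ring
    _ ≤ ε * (h / n) := by
      gcongr
      exact (div_le_div_of_nonneg_left hd hn (by linarith)).trans hdn

lemma tendsto_sum_Icc_add_one {v : ℕ → ℕ → ℝ} {I : ℝ} (K : ℕ)
    (hv : Tendsto (fun n => ∑ k ∈ Icc 1 n, v n k) atTop (nhds I))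
    (hK : ∀ k ∈ Icc 1 K, Tendsto (fun n => v n k) atTop (nhds 0)) :
    Tendsto (fun n => ∑ k ∈ Icc (K + 1) n, v n k) atTop (nhds I) := by
  have hhead : Tendsto (fun n => ∑ k ∈ Icc 1 K, v n k) atTop (nhds 0) := by
    simpa using tendsto_finsetSum _ hK
  refine (sub_zero I ▸ hv.sub hhead).congr' ?_
  filter_upwards [eventually_ge_atTop K] with n hn
  have hsplit := sum_Ioc_consecutive (fun k => v n k) K.zero_le hn
  simp only [← Icc_add_one_left_eq_Ioc, zero_add] at hsplit
  rw [← hsplit, add_sub_cancel_left]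

lemma tendsto_sum_of_abs_sub_le_mul {ι : Type*} {s : ℕ → Finset ι} {u v : ℕ → ι → ℝ} {I : ℝ}
    (hu : Tendsto (fun n => ∑ k ∈ s n, u n k) atTop (nhds I))
    (huv : ∀ ε > 0, ∀ᶠ n in atTop, ∀ k ∈ s n, |v n k - u n k| ≤ ε * u n k) :
    Tendsto (fun n => ∑ k ∈ s n, v n k) atTop (nhds I) := by
  suffices h : Tendsto (fun n => ∑ k ∈ s n, (v n k - u n k)) atTop (nhds 0) by
    simpa using hu.add h
  refine Metric.tendsto_nhds.2 fun ε hε => ?_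
  have hC : 0 < |I| + 1 := by positivity
  filter_upwards [huv (ε / (|I| + 1)) (by positivity),
    hu.eventually_lt_const ((le_abs_self I).trans_lt (lt_add_one _))]
    with n hn hbdd
  rw [Real.dist_0_eq_abs]
  calc |∑ k ∈ s n, (v n k - u n k)| ≤ ∑ k ∈ s n, |v n k - u n k| := abs_sum_le_sum_abs _ _
    _ ≤ ∑ k ∈ s n, ε / (|I| + 1) * u n k := sum_le_sum hn
    _ = ε / (|I| + 1) * ∑ k ∈ s n, u n k := (mul_sum _ _ _).symm
    _ < ε / (|I| + 1) * (|I| + 1) := by gcongr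
    _ = ε := div_mul_cancel₀ ε hC.ne'

noncomputable def uniformPartition (a b : ℝ) (n k : ℕ) : ℝ := a + k / n * (b - a)

namespace uniformPartition

variable {a b : ℝ} {n : ℕ}

@[simp] lemma zero : uniformPartition a b n 0 = a := by simp [uniformPartition]

lemma self (hn : n ≠ 0) : uniformPartition a b n n = b := by
  simp [uniformPartition, hn]

lemma sub_pred {k : ℕ} (hn : n ≠ 0) (hk : 1 ≤ k) :
    uniformPartition a b n k - uniformPartition a b n (k - 1) = (b - a) / n := by
  simp only [uniformPartition, Nat.cast_sub hk, Nat.cast_one]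
  field_simp
  ring

lemma monotone (hab : a ≤ b) : Monotone (uniformPartition a b n) := fun _ _ hkl => by
  simp only [uniformPartition]
  gcongr

lemma mem_Icc (hab : a ≤ b) {k : ℕ} (hk : k ≤ n) : uniformPartition a b n k ∈ Set.Icc a b := by
  have hkn : (k : ℝ) / n ≤ 1 := div_le_one_of_le₀ (by exact_mod_cast hk) n.cast_nonneg
  have : 0 ≤ (k : ℝ) / n := by positivity
  constructor <;> simp only [uniformPartition] <;> nlinarith

end uniformPartition

namespace IsRiemannIntegral

variable {f : ℝ → ℝ} {a b I : ℝ}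

lemma eventually_abs_sum_uniformPartition_sub_lt (hf : IsRiemannIntegral f a b I) (hab : a < b)
    {ε : ℝ} (hε : 0 < ε) :
    ∀ᶠ n : ℕ in atTop, ∀ ξ : ℕ → ℝ,
      (∀ k ∈ Icc 1 n, ξ k ∈ Set.Icc (uniformPartition a b n (k - 1)) (uniformPartition a b n k)) →
      |∑ k ∈ Icc 1 n, f (ξ k) * ((b - a) / n) - I| < ε := by
  obtain ⟨δ, hδ, H⟩ := hf ε hε
  filter_upwards [(tendsto_const_div_atTop_nhds_zero_nat (b - a)).eventually_lt_const hδ,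
    eventually_ne_atTop 0] with n hmesh hn ξ hξ
  have hstep : ∀ k ∈ Icc 1 n,
      uniformPartition a b n k - uniformPartition a b n (k - 1) = (b - a) / n :=
    fun k hk => uniformPartition.sub_pred hn (mem_Icc.1 hk).1
  have hwidth : 0 < (b - a) / n := div_pos (sub_pos.2 hab) (by positivity)
  have hsum := H n _ ξ (Nat.pos_of_ne_zero hn) uniformPartition.zero (uniformPartition.self hn)
    (fun k hk => sub_pos.1 (hstep k hk ▸ hwidth)) (fun k hk => hstep k hk ▸ hmesh) hξ
  rwa [sum_congr rfl fun k hk => by rw [hstep k hk]] at hsum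

lemma tendsto_sum_uniformPartition (hf : IsRiemannIntegral f a b I) (hab : a < b) :
    Tendsto (fun n : ℕ => ∑ k ∈ Icc 1 n, f (uniformPartition a b n k) * ((b - a) / n))
      atTop (nhds I) :=
  Metric.tendsto_nhds.2 fun _ hε => (hf.eventually_abs_sum_uniformPartition_sub_lt hab hε).mono
    fun _ hn => hn _ fun _ _ => ⟨uniformPartition.monotone hab.le (Nat.sub_le _ _), le_rfl⟩

lemma bddAbove_image (hf : IsRiemannIntegral f a b I) (hab : a < b) :
    BddAbove (f '' Set.Icc a b) := by
  obtain ⟨n, hn, hn0⟩ :=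
    ((hf.eventually_abs_sum_uniformPartition_sub_lt hab one_pos).and (eventually_ne_atTop 0)).exists
  set x := uniformPartition a b n
  have hwidth : 0 < (b - a) / n := div_pos (sub_pos.2 hab) (by positivity)
  have htag : ∀ j ∈ Icc 1 n, x j ∈ Set.Icc (x (j - 1)) (x j) :=
    fun j _ => ⟨uniformPartition.monotone hab.le (Nat.sub_le _ _), le_rfl⟩
  have hcell : ∀ k ∈ Icc 1 n, ∀ t ∈ Set.Icc (x (k - 1)) (x k),
      f t ≤ f (x k) + 2 / ((b - a) / n) := by
    intro k hk t ht
    have hx := abs_lt.1 (hn x htag)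
    have hxt := abs_lt.1 (hn (Function.update x k t) fun j hj => by
      rcases eq_or_ne j k with rfl | hjk
      · simpa using ht
      · simpa [hjk] using htag j hj)
    have hdiff : ∑ j ∈ Icc 1 n, f (Function.update x k t j) * ((b - a) / n) =
        ∑ j ∈ Icc 1 n, f (x j) * ((b - a) / n) + (f t - f (x k)) * ((b - a) / n) := by
      rw [sum_congr rfl fun j _ => Function.apply_update (fun _ s => f s * ((b - a) / n)) x k t j,
        sum_update_of_mem hk, sdiff_singleton_eq_erase,
        ← add_sum_erase _ (fun j => f (x j) * ((b - a) / n)) hk]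
      ring
    rw [← sub_le_iff_le_add', le_div_iff₀ hwidth]
    linarith
  refine BddAbove.mono (t := ⋃ k ∈ (Icc 1 n : Set ℕ), f '' Set.Icc (x (k - 1)) (x k)) ?_
    ((finite_toSet _).bddAbove_biUnion.2 fun k hk => ⟨f (x k) + 2 / ((b - a) / n), ?_⟩)
  · rintro _ ⟨t, ht, rfl⟩
    obtain ⟨k, hk, htk⟩ := exists_mem_Icc_pred_of_le (x := x) (Nat.pos_of_ne_zero hn0)
      (by simpa [x] using ht.1) (by simpa [x, uniformPartition.self hn0] using ht.2)
    exact Set.mem_biUnion (x := k) hk ⟨t, htk, rfl⟩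
  · rintro _ ⟨t, ht, rfl⟩
    exact hcell k hk t ht

end IsRiemannIntegral

theorem deleting_item_disturbing_mesh (f : ℝ → ℝ) (a b I : ℝ) (hab : a < b) (K : ℕ)
    (hf : IsRiemannIntegral f a b I)
    (hpos : ∀ x ∈ Set.Icc a b, 0 ≤ f x)
    (d : ℕ → ℕ → ℝ)
    (hd0 : ∀ n : ℕ, ∀ k ∈ Finset.Icc 1 n, 0 ≤ d n k)
    (hd : ∀ ε > 0, ∃ N : ℕ, ∀ n ≥ N, ∀ k ∈ Finset.Icc 1 n, d n k / n < ε) :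
    Tendsto (fun n : ℕ =>
      ∑ k ∈ Finset.Icc (K + 1) n, f (a + (k : ℝ) / n * (b - a)) * ((b - a) / (n + d n k)))
      atTop (nhds I) := by
  obtain ⟨M, hM⟩ := hf.bddAbove_image hab
  have hmem {n k : ℕ} (hk : k ≤ n) := uniformPartition.mem_Icc hab.le hk
  have hwidth (n : ℕ) : 0 ≤ (b - a) / n := div_nonneg (sub_pos.2 hab).le n.cast_nonneg
  have hhead : ∀ k ∈ Icc 1 K,
      Tendsto (fun n : ℕ => f (uniformPartition a b n k) * ((b - a) / n)) atTop (nhds 0) := by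
    intro k _
    refine squeeze_zero' ?_ ?_
      (by simpa using (tendsto_const_div_atTop_nhds_zero_nat (b - a)).const_mul M) <;>
      filter_upwards [eventually_ge_atTop k] with n hn
    · exact mul_nonneg (hpos _ (hmem hn)) (hwidth n)
    · exact mul_le_mul_of_nonneg_right (hM ⟨_, hmem hn, rfl⟩) (hwidth n)
  refine tendsto_sum_of_abs_sub_le_mul
    (tendsto_sum_Icc_add_one K (hf.tendsto_sum_uniformPartition hab) hhead) fun ε hε => ?_
  obtain ⟨N, hN⟩ := hd ε hε
  filter_upwards [eventually_ge_atTop (max N 1)] with n hn k hk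
  have hk1 : k ∈ Icc 1 n := Icc_subset_Icc_left (by omega) hk
  exact abs_mul_div_add_sub_le (hpos _ (hmem (mem_Icc.1 hk).2)) (sub_pos.2 hab).le
    (Nat.cast_pos.2 (by omega)) (hd0 n k hk1) (hN n (le_of_max_le_left hn) k hk1).le
end

section
/- Let f be nonnegative and Riemann integrable on [a,b]. Suppose d_{n,k} = O(n^p) uniformly in k for some p < 1, and K(n) = O(n^q) for some 0 < q < 1 with K(n) ≤ n. Then lim_{n→∞} Σ_{k=1}^{n−K(n)} f(a + (k/n)(b−a)) · (b−a)/(n + d_{n,k}) = ∫_a^b f(x) dx. -/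
open Filter Finset Real

/-!
The disturbed sum differs from the right-endpoint Riemann sum `∑ f(x_k) (b-a)/n`, which tends to
`∫ f`, in two ways. Each of the first `n - K(n)` weights shrinks by at most
`(b-a) d_{n,k} / n² = O(n^{p-2})`, and the `K(n)` deleted terms carry weight `(b-a)/n` each. Since
a Riemann integrable function is bounded, `|f| ≤ M`, the total error is
`O(M (n^{p-1} + n^{q-1})) → 0`.
-/

noncomputable def uniformGrid (a b : ℝ) (n k : ℕ) : ℝ := a + (k : ℝ) / n * (b - a)

section uniformGrid

variable {a b : ℝ} {n k : ℕ}

@[simp]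
lemma uniformGrid_zero : uniformGrid a b n 0 = a := by simp [uniformGrid]

lemma uniformGrid_self (hn : n ≠ 0) : uniformGrid a b n n = b := by
  simp [uniformGrid, div_self (Nat.cast_ne_zero.2 hn : (n : ℝ) ≠ 0)]

lemma uniformGrid_sub_pred (hk : 1 ≤ k) :
    uniformGrid a b n k - uniformGrid a b n (k - 1) = (b - a) / n := by
  simp only [uniformGrid, Nat.cast_sub hk, Nat.cast_one]
  ring

lemma monotone_uniformGrid (hab : a ≤ b) : Monotone (uniformGrid a b n) := by
  intro i j hij
  simp only [uniformGrid]
  gcongr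

lemma uniformGrid_mem_Icc (hab : a ≤ b) (hk : k ≤ n) : uniformGrid a b n k ∈ Set.Icc a b := by
  rcases n.eq_zero_or_pos with rfl | hn
  · simp [uniformGrid, hab]
  · have hmono := monotone_uniformGrid (n := n) hab
    constructor
    · simpa using hmono k.zero_le
    · simpa [uniformGrid_self hn.ne'] using hmono hk

end uniformGrid

lemma exists_mem_Icc_pred_of_monotone {x : ℕ → ℝ} (hx : Monotone x) {n : ℕ} (hn : 1 ≤ n)
    {t : ℝ} (ht : t ∈ Set.Icc (x 0) (x n)) :
    ∃ j ∈ Icc 1 n, t ∈ Set.Icc (x (j - 1)) (x j) := by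
  classical
  have hP : ∃ k, t ≤ x k := ⟨n, ht.2⟩
  have hkn : Nat.find hP ≤ n := Nat.find_min' hP ht.2
  rcases (Nat.find hP).eq_zero_or_pos with h0 | hpos
  · refine ⟨1, mem_Icc.2 ⟨le_rfl, hn⟩, ht.1, ?_⟩
    exact (h0 ▸ Nat.find_spec hP).trans (hx zero_le_one)
  · refine ⟨Nat.find hP, mem_Icc.2 ⟨hpos, hkn⟩, ?_, Nat.find_spec hP⟩
    exact (not_le.1 (Nat.find_min hP (Nat.sub_one_lt hpos.ne'))).le

namespace IsRiemannIntegral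

variable {f : ℝ → ℝ} {a b I : ℝ}

lemma eventually_abs_sum_uniformGrid_sub_lt (hf : IsRiemannIntegral f a b I) (hab : a < b)
    {ε : ℝ} (hε : 0 < ε) :
    ∀ᶠ n : ℕ in atTop, ∀ ξ : ℕ → ℝ,
      (∀ k ∈ Icc 1 n, ξ k ∈ Set.Icc (uniformGrid a b n (k - 1)) (uniformGrid a b n k)) →
      |∑ k ∈ Icc 1 n, f (ξ k) * ((b - a) / n) - I| < ε := by
  obtain ⟨δ, hδ, H⟩ := hf ε hε
  have hmesh : ∀ᶠ n : ℕ in atTop, (b - a) / n < δ :=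
    (tendsto_const_div_atTop_nhds_zero_nat (b - a)).eventually (gt_mem_nhds hδ)
  filter_upwards [hmesh, eventually_gt_atTop 0] with n hmesh hn ξ hξ
  have hstep : ∀ k ∈ Icc 1 n, uniformGrid a b n k - uniformGrid a b n (k - 1) = (b - a) / n :=
    fun k hk => uniformGrid_sub_pred (mem_Icc.1 hk).1
  have hΔ : 0 < (b - a) / n := div_pos (sub_pos.2 hab) (Nat.cast_pos.2 hn)
  have := H n (uniformGrid a b n) ξ hn uniformGrid_zero (uniformGrid_self hn.ne')
    (fun k hk => sub_pos.1 (hstep k hk ▸ hΔ)) (fun k hk => hstep k hk ▸ hmesh) hξ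
  rwa [sum_congr rfl fun k hk => by rw [hstep k hk]] at this

lemma tendsto_sum_uniformGrid (hf : IsRiemannIntegral f a b I) (hab : a < b) :
    Tendsto (fun n : ℕ => ∑ k ∈ Icc 1 n, f (uniformGrid a b n k) * ((b - a) / n))
      atTop (nhds I) :=
  Metric.tendsto_nhds.2 fun _ hε => (hf.eventually_abs_sum_uniformGrid_sub_lt hab hε).mono
    fun _ hn => hn _ fun k _ => ⟨monotone_uniformGrid hab.le (Nat.sub_le k 1), le_rfl⟩

-- Moving a single tag `x j` to another point `t` of its cell changes the Riemann sum by
-- `(f t - f (x j)) * (b - a) / n`, and both sums are within `1` of `I` once the mesh is small.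
lemma exists_abs_le (hf : IsRiemannIntegral f a b I) (hab : a < b) :
    ∃ M, ∀ t ∈ Set.Icc a b, |f t| ≤ M := by
  obtain ⟨n, hsum, hn⟩ :=
    ((hf.eventually_abs_sum_uniformGrid_sub_lt hab one_pos).and (eventually_ge_atTop 1)).exists
  set x := uniformGrid a b n
  set Δ := (b - a) / n
  have hΔ : 0 < Δ := div_pos (sub_pos.2 hab) (Nat.cast_pos.2 hn)
  have hx : Monotone x := monotone_uniformGrid hab.le
  refine ⟨∑ k ∈ Icc 1 n, |f (x k)| + 2 / Δ, fun t ht => ?_⟩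
  obtain ⟨j, hj, htj⟩ := exists_mem_Icc_pred_of_monotone hx hn (t := t)
    (by simpa [x, uniformGrid_self (show n ≠ 0 by omega)] using ht)
  have hright := hsum x fun k _ => ⟨hx (Nat.sub_le k 1), le_rfl⟩
  have hmoved := hsum (Function.update x j t) fun k _ => by
    rcases eq_or_ne k j with rfl | hkj
    · simpa using htj
    · simpa [hkj] using (⟨hx (Nat.sub_le k 1), le_rfl⟩ : x k ∈ Set.Icc (x (k - 1)) (x k))
  have hdiff : ∑ k ∈ Icc 1 n, f (Function.update x j t k) * Δ - ∑ k ∈ Icc 1 n, f (x k) * Δ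
      = (f t - f (x j)) * Δ := by
    rw [← sum_sub_distrib, sum_eq_single_of_mem j hj fun k _ hkj => by simp [hkj]]
    simp [sub_mul]
  have hft : |f t - f (x j)| < 2 / Δ := by
    rw [lt_div_iff₀ hΔ, ← abs_of_pos hΔ, ← abs_mul, ← hdiff, abs_lt]
    rw [abs_lt] at hright hmoved
    constructor <;> linarith
  calc |f t| ≤ |f (x j)| + |f t - f (x j)| := by
        linarith [abs_sub_abs_le_abs_sub (f t) (f (x j))]
    _ ≤ ∑ k ∈ Icc 1 n, |f (x k)| + 2 / Δ :=
      add_le_add (single_le_sum (fun k _ => abs_nonneg (f (x k))) hj) hft.le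

end IsRiemannIntegral

lemma abs_sum_Icc_sub_sum_Icc_le {g u v : ℕ → ℝ} {m n : ℕ} {M α β : ℝ} (hmn : m ≤ n)
    (hg : ∀ k ∈ Icc 1 n, |g k| ≤ M) (huv : ∀ k ∈ Icc 1 m, |u k - v k| ≤ α)
    (hu : ∀ k ∈ Icc 1 n, |u k| ≤ β) :
    |∑ k ∈ Icc 1 n, g k * u k - ∑ k ∈ Icc 1 m, g k * v k|
      ≤ M * (m * α + (n - m : ℕ) * β) := by
  have hIcc : ∀ l, Icc 1 l = Ioc 0 l := fun l => Icc_add_one_left_eq_Ioc 0 l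
  have hsplit : ∑ k ∈ Icc 1 n, g k * u k - ∑ k ∈ Icc 1 m, g k * v k
      = ∑ k ∈ Icc 1 m, g k * (u k - v k) + ∑ k ∈ Ioc m n, g k * u k := by
    rw [hIcc, hIcc, ← sum_Ioc_consecutive _ m.zero_le hmn]
    simp only [mul_sub, sum_sub_distrib]
    ring
  have hhead : ∀ k ∈ Icc 1 m, |g k * (u k - v k)| ≤ M * α := fun k hk => by
    have hgk := hg k (Icc_subset_Icc_right hmn hk)
    rw [abs_mul]
    exact mul_le_mul hgk (huv k hk) (abs_nonneg _) ((abs_nonneg _).trans hgk)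
  have htail : ∀ k ∈ Ioc m n, |g k * u k| ≤ M * β := fun k hk => by
    have hk' : k ∈ Icc 1 n := by
      rw [hIcc]; exact Ioc_subset_Ioc_left m.zero_le hk
    have hgk := hg k hk'
    rw [abs_mul]
    exact mul_le_mul hgk (hu k hk') (abs_nonneg _) ((abs_nonneg _).trans hgk)
  calc _ ≤ ∑ k ∈ Icc 1 m, |g k * (u k - v k)| + ∑ k ∈ Ioc m n, |g k * u k| := by
        rw [hsplit]
        exact (abs_add_le _ _).trans (add_le_add (abs_sum_le_sum_abs _ _) (abs_sum_le_sum_abs _ _))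
    _ ≤ m * (M * α) + (n - m : ℕ) * (M * β) := by
        gcongr
        · simpa using sum_le_card_nsmul _ _ _ hhead
        · simpa using sum_le_card_nsmul _ _ _ htail
    _ = M * (m * α + (n - m : ℕ) * β) := by ring

lemma abs_div_sub_div_add_le {c x d D : ℝ} (hc : 0 ≤ c) (hx : 0 < x) (hd : 0 ≤ d)
    (hdD : d ≤ D) : |c / x - c / (x + d)| ≤ c * D / x ^ 2 := by
  have hxd : 0 < x + d := by linarith
  have hsub : c / x - c / (x + d) = c * d / (x * (x + d)) := by
    field_simp
    ring
  rw [hsub, abs_of_nonneg (by positivity), sq]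
  gcongr
  · exact mul_nonneg hc (hd.trans hdD)
  · linarith

lemma tendsto_natCast_rpow_atTop_nhds_zero {p : ℝ} (hp : p < 0) :
    Tendsto (fun n : ℕ => (n : ℝ) ^ p) atTop (nhds 0) := by
  simpa [Function.comp_def] using
    (tendsto_rpow_neg_atTop (neg_pos.2 hp)).comp tendsto_natCast_atTop_atTop

lemma abs_sum_uniformGrid_sub_sum_disturbed_le {f : ℝ → ℝ} {a b M C p C' q : ℝ}
    {w : ℕ → ℝ} {n L : ℕ} (hab : a < b) (hM : ∀ t ∈ Set.Icc a b, |f t| ≤ M)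
    (hC : 0 < C) (hn : 1 ≤ n) (hw0 : ∀ k ∈ Icc 1 n, 0 ≤ w k)
    (hwb : ∀ k ∈ Icc 1 n, w k ≤ C * (n : ℝ) ^ p)
    (hLn : L ≤ n) (hLb : (L : ℝ) ≤ C' * (n : ℝ) ^ q) :
    |∑ k ∈ Icc 1 n, f (uniformGrid a b n k) * ((b - a) / n)
        - ∑ k ∈ Icc 1 (n - L), f (uniformGrid a b n k) * ((b - a) / (n + w k))|
      ≤ M * (b - a) * (C * (n : ℝ) ^ (p - 1) + C' * (n : ℝ) ^ (q - 1)) := by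
  have hM0 : 0 ≤ M := (abs_nonneg _).trans (hM a (Set.left_mem_Icc.2 hab.le))
  have hba : 0 < b - a := sub_pos.2 hab
  have hn' : (0 : ℝ) < n := Nat.cast_pos.2 hn
  have hsub : Icc 1 (n - L) ⊆ Icc 1 n := Icc_subset_Icc_right (Nat.sub_le n L)
  calc _ ≤ M * ((n - L : ℕ) * ((b - a) * (C * (n : ℝ) ^ p) / n ^ 2)
        + (n - (n - L) : ℕ) * ((b - a) / n)) :=
        abs_sum_Icc_sub_sum_Icc_le (Nat.sub_le n L)
          (fun k hk => hM _ (uniformGrid_mem_Icc hab.le (mem_Icc.1 hk).2))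
          (fun k hk => abs_div_sub_div_add_le hba.le hn' (hw0 k (hsub hk)) (hwb k (hsub hk)))
          (fun k _ => (abs_of_pos (div_pos hba hn')).le)
    _ ≤ M * (n * ((b - a) * (C * (n : ℝ) ^ p) / n ^ 2)
        + C' * (n : ℝ) ^ q * ((b - a) / n)) := by
        rw [Nat.sub_sub_self hLn]
        gcongr
        exact Nat.sub_le n L
    _ = M * (b - a) * (C * (n : ℝ) ^ (p - 1) + C' * (n : ℝ) ^ (q - 1)) := by
        rw [rpow_sub_one hn'.ne', rpow_sub_one hn'.ne']
        field_simp

theorem deleting_Kn_disturbing_mesh_bigO_general (f : ℝ → ℝ) (a b I : ℝ) (hab : a < b)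
    (hf : IsRiemannIntegral f a b I)
    (d : ℕ → ℕ → ℝ) (C p : ℝ) (hC : 0 < C) (hp : p < 1)
    (hd0 : ∀ n : ℕ, ∀ k ∈ Finset.Icc 1 n, 0 ≤ d n k)
    (hdb : ∀ n : ℕ, ∀ k ∈ Finset.Icc 1 n, d n k ≤ C * (n : ℝ) ^ p)
    (K : ℕ → ℕ) (C' q : ℝ) (hq1 : q < 1)
    (hKle : ∀ n, K n ≤ n)
    (hKb : ∀ n : ℕ, (K n : ℝ) ≤ C' * (n : ℝ) ^ q) :
    Tendsto (fun n : ℕ =>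
      ∑ k ∈ Finset.Icc 1 (n - K n), f (a + (k : ℝ) / n * (b - a)) * ((b - a) / (n + d n k)))
      atTop (nhds I) := by
  obtain ⟨M, hM⟩ := hf.exists_abs_le hab
  have herror := (((tendsto_natCast_rpow_atTop_nhds_zero (sub_neg.2 hp)).const_mul C).add
    ((tendsto_natCast_rpow_atTop_nhds_zero (sub_neg.2 hq1)).const_mul C')).const_mul (M * (b - a))
  simp only [mul_zero, add_zero] at herror
  have hdiff := squeeze_zero_norm' (eventually_atTop.2 ⟨1, fun n hn =>
    (Real.norm_eq_abs _).trans_le <| abs_sum_uniformGrid_sub_sum_disturbed_le hab hM hC hn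
      (hd0 n) (hdb n) (hKle n) (hKb n)⟩) herror
  have hlim := (hf.tendsto_sum_uniformGrid hab).sub hdiff
  rw [sub_zero] at hlim
  exact hlim.congr fun n => sub_sub_cancel _ _

theorem deleting_Kn_disturbing_mesh_bigO (f : ℝ → ℝ) (a b I : ℝ) (hab : a < b)
    (hf : IsRiemannIntegral f a b I)
    (hpos : ∀ x ∈ Set.Icc a b, 0 ≤ f x)
    (d : ℕ → ℕ → ℝ) (C p : ℝ) (hC : 0 < C) (hp : p < 1)
    (hd0 : ∀ n : ℕ, ∀ k ∈ Finset.Icc 1 n, 0 ≤ d n k)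
    (hdb : ∀ n : ℕ, ∀ k ∈ Finset.Icc 1 n, d n k ≤ C * (n : ℝ) ^ p)
    (K : ℕ → ℕ) (C' q : ℝ) (hC' : 0 < C') (hq0 : 0 < q) (hq1 : q < 1)
    (hKle : ∀ n, K n ≤ n)
    (hKb : ∀ n : ℕ, (K n : ℝ) ≤ C' * (n : ℝ) ^ q) :
    Tendsto (fun n : ℕ =>
      ∑ k ∈ Finset.Icc 1 (n - K n), f (a + (k : ℝ) / n * (b - a)) * ((b - a) / (n + d n k)))
      atTop (nhds I) :=
  deleting_Kn_disturbing_mesh_bigO_general f a b I hab hf d C p hC hp hd0 hdb K C' q hq1 hKle hKb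
end
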